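/- Let ℒ = [σ_uu | σ_u | σ_v], ℳ = [σ_uv | σ_u | σ_v], 𝒩 = [σ_vv | σ_u | σ_v], evaluated at a point (u,v) ∈ O. Then det(ℒᵀ𝒩) − det(ℳᵀℳ) = det B₁ − det B₂, where B₁ = [[−½E_vv + F_uv − ½G_uu, ½E_u, F_u − ½E_v], [F_v − ½G_u, E, F], [½G_v, F, G]] and B₂ = [[0, ½E_v, ½G_u], [½E_v, E, F], [½G_u, F, G]]. -/

import Mathlib

noncomputable section

open RealInnerProductSpace

/-- Euclidean 3-space `ℝ³`. -/
abbrev E3 : Type := EuclideanSpace ℝ (Fin 3)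

/-- Partial derivative of `f : ℝ² → X` with respect to the first variable `u`. -/
def pdu {X : Type} [NormedAddCommGroup X] [NormedSpace ℝ X]
    (f : ℝ × ℝ → X) (p : ℝ × ℝ) : X :=
  deriv (fun t => f (t, p.2)) p.1

/-- Partial derivative of `f : ℝ² → X` with respect to the second variable `v`. -/
def pdv {X : Type} [NormedAddCommGroup X] [NormedSpace ℝ X]
    (f : ℝ × ℝ → X) (p : ℝ × ℝ) : X :=
  deriv (fun t => f (p.1, t)) p.2

section Aux

variable {X : Type} [NormedAddCommGroup X] [NormedSpace ℝ X]

theorem pdu_eq_fderiv {f : ℝ × ℝ → X} {p : ℝ × ℝ} (hf : DifferentiableAt ℝ f p) :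
    pdu f p = fderiv ℝ f p (1, 0) := by
  have h1 : HasDerivAt (fun t : ℝ => (t, p.2)) ((1 : ℝ), (0 : ℝ)) p.1 :=
    (hasDerivAt_id p.1).prodMk (hasDerivAt_const _ _)
  have h2 : HasDerivAt (fun t => f (t, p.2)) (fderiv ℝ f p (1, 0)) p.1 :=
    hf.hasFDerivAt.comp_hasDerivAt p.1 h1
  exact h2.deriv

theorem pdv_eq_fderiv {f : ℝ × ℝ → X} {p : ℝ × ℝ} (hf : DifferentiableAt ℝ f p) :
    pdv f p = fderiv ℝ f p (0, 1) := by
  have h1 : HasDerivAt (fun t : ℝ => (p.1, t)) ((0 : ℝ), (1 : ℝ)) p.2 :=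
    (hasDerivAt_const _ _).prodMk (hasDerivAt_id p.2)
  have h2 : HasDerivAt (fun t => f (p.1, t)) (fderiv ℝ f p (0, 1)) p.2 :=
    hf.hasFDerivAt.comp_hasDerivAt p.2 h1
  exact h2.deriv

theorem pdu_congr {f g : ℝ × ℝ → X} {p : ℝ × ℝ} (h : f =ᶠ[nhds p] g) :
    pdu f p = pdu g p := by
  have ht : Filter.Tendsto (fun t : ℝ => (t, p.2)) (nhds p.1) (nhds p) :=
    (continuous_id.prodMk continuous_const).tendsto p.1
  exact Filter.EventuallyEq.deriv_eq (h.comp_tendsto ht)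

theorem pdv_congr {f g : ℝ × ℝ → X} {p : ℝ × ℝ} (h : f =ᶠ[nhds p] g) :
    pdv f p = pdv g p := by
  have ht : Filter.Tendsto (fun t : ℝ => (p.1, t)) (nhds p.2) (nhds p) :=
    (continuous_const.prodMk continuous_id).tendsto p.2
  exact Filter.EventuallyEq.deriv_eq (h.comp_tendsto ht)

variable {O : Set (ℝ × ℝ)}

/-- the directional derivative operator -/
def Dw (w : ℝ × ℝ) (f : ℝ × ℝ → X) (q : ℝ × ℝ) : X := fderiv ℝ f q w

theorem Dw_smooth (hO : IsOpen O) {f : ℝ × ℝ → X} (hf : ContDiffOn ℝ (⊤ : ℕ∞) f O) (w : ℝ × ℝ) :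
    ContDiffOn ℝ (⊤ : ℕ∞) (Dw w f) O := by
  have h1 : ContDiffOn ℝ (⊤ : ℕ∞) (fun q => fderiv ℝ f q) O :=
    hf.fderiv_of_isOpen hO (by simp)
  exact h1.clm_apply contDiffOn_const

theorem diffAt_of_smoothOn (hO : IsOpen O) {f : ℝ × ℝ → X} (hf : ContDiffOn ℝ (⊤ : ℕ∞) f O) {p : ℝ × ℝ}
    (hp : p ∈ O) : DifferentiableAt ℝ f p :=
  ((hf.differentiableOn (by simp)).differentiableAt (hO.mem_nhds hp))

theorem pdu_eventuallyEq (hO : IsOpen O) {f : ℝ × ℝ → X} (hf : ContDiffOn ℝ (⊤ : ℕ∞) f O) {p : ℝ × ℝ}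
    (hp : p ∈ O) : pdu f =ᶠ[nhds p] Dw (1, 0) f := by
  filter_upwards [hO.eventually_mem hp] with q hq
  exact pdu_eq_fderiv (diffAt_of_smoothOn hO hf hq)

theorem pdv_eventuallyEq (hO : IsOpen O) {f : ℝ × ℝ → X} (hf : ContDiffOn ℝ (⊤ : ℕ∞) f O) {p : ℝ × ℝ}
    (hp : p ∈ O) : pdv f =ᶠ[nhds p] Dw (0, 1) f := by
  filter_upwards [hO.eventually_mem hp] with q hq
  exact pdv_eq_fderiv (diffAt_of_smoothOn hO hf hq)

/-- Clairaut on an open set. -/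
theorem Dw_comm (hO : IsOpen O) {f : ℝ × ℝ → X} (hf : ContDiffOn ℝ (⊤ : ℕ∞) f O) {p : ℝ × ℝ}
    (hp : p ∈ O) (v w : ℝ × ℝ) : Dw w (Dw v f) p = Dw v (Dw w f) p := by
  have hder : ContDiffOn ℝ (⊤ : ℕ∞) (fun q => fderiv ℝ f q) O := hf.fderiv_of_isOpen hO (by simp)
  have hd2 : DifferentiableAt ℝ (fun q => fderiv ℝ f q) p := diffAt_of_smoothOn hO hder hp
  set Φ := fderiv ℝ (fun q => fderiv ℝ f q) p with hΦ
  have hΦ' : HasFDerivAt (fun q => fderiv ℝ f q) Φ p := hd2.hasFDerivAt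
  have hev : ∀ᶠ y in nhds p, HasFDerivAt f (fderiv ℝ f y) y := by
    filter_upwards [hO.eventually_mem hp] with q hq
    exact (diffAt_of_smoothOn hO hf hq).hasFDerivAt
  have hsymm : ∀ v w : ℝ × ℝ, Φ v w = Φ w v :=
    second_derivative_symmetric_of_eventually hev hΦ'
  have key : ∀ u w' : ℝ × ℝ, Dw w' (Dw u f) p = Φ w' u := by
    intro u w'
    have hc : HasFDerivAt (Dw u f)
        ((ContinuousLinearMap.apply ℝ X u).comp Φ) p :=
      (ContinuousLinearMap.apply ℝ X u).hasFDerivAt.comp p hΦ'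
    show fderiv ℝ (Dw u f) p w' = Φ w' u
    rw [hc.fderiv]; rfl
  rw [key v w, key w v, hsymm]

theorem pdu_pdu (hO : IsOpen O) {f : ℝ × ℝ → X} (hf : ContDiffOn ℝ (⊤ : ℕ∞) f O) {p : ℝ × ℝ} (hp : p ∈ O) :
    pdu (pdu f) p = Dw (1,0) (Dw (1,0) f) p := by
  rw [pdu_congr (pdu_eventuallyEq hO hf hp)]
  exact pdu_eq_fderiv (diffAt_of_smoothOn hO (Dw_smooth hO hf _) hp)

theorem pdv_pdu (hO : IsOpen O) {f : ℝ × ℝ → X} (hf : ContDiffOn ℝ (⊤ : ℕ∞) f O) {p : ℝ × ℝ} (hp : p ∈ O) :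
    pdv (pdu f) p = Dw (0,1) (Dw (1,0) f) p := by
  rw [pdv_congr (pdu_eventuallyEq hO hf hp)]
  exact pdv_eq_fderiv (diffAt_of_smoothOn hO (Dw_smooth hO hf _) hp)

theorem pdu_pdv (hO : IsOpen O) {f : ℝ × ℝ → X} (hf : ContDiffOn ℝ (⊤ : ℕ∞) f O) {p : ℝ × ℝ} (hp : p ∈ O) :
    pdu (pdv f) p = Dw (1,0) (Dw (0,1) f) p := by
  rw [pdu_congr (pdv_eventuallyEq hO hf hp)]
  exact pdu_eq_fderiv (diffAt_of_smoothOn hO (Dw_smooth hO hf _) hp)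

theorem pdv_pdv (hO : IsOpen O) {f : ℝ × ℝ → X} (hf : ContDiffOn ℝ (⊤ : ℕ∞) f O) {p : ℝ × ℝ} (hp : p ∈ O) :
    pdv (pdv f) p = Dw (0,1) (Dw (0,1) f) p := by
  rw [pdv_congr (pdv_eventuallyEq hO hf hp)]
  exact pdv_eq_fderiv (diffAt_of_smoothOn hO (Dw_smooth hO hf _) hp)

end Aux

/-- derivative of inner product of two smooth maps. -/
theorem Dw_inner {O : Set (ℝ × ℝ)} (hO : IsOpen O) {f g : ℝ × ℝ → E3}
    (hf : ContDiffOn ℝ (⊤ : ℕ∞) f O) (hg : ContDiffOn ℝ (⊤ : ℕ∞) g O) {p : ℝ × ℝ} (hp : p ∈ O)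
    (w : ℝ × ℝ) :
    Dw w (fun q => ⟪f q, g q⟫) p = ⟪f p, Dw w g p⟫ + ⟪Dw w f p, g p⟫ :=
  fderiv_inner_apply (𝕜 := ℝ) (diffAt_of_smoothOn hO hf hp) (diffAt_of_smoothOn hO hg hp) w

theorem pdu_inner {O : Set (ℝ × ℝ)} (hO : IsOpen O) {f g : ℝ × ℝ → E3}
    (hf : ContDiffOn ℝ (⊤ : ℕ∞) f O) (hg : ContDiffOn ℝ (⊤ : ℕ∞) g O) {p : ℝ × ℝ} (hp : p ∈ O) :
    pdu (fun q => ⟪f q, g q⟫) p = ⟪f p, Dw (1,0) g p⟫ + ⟪Dw (1,0) f p, g p⟫ := by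
  have d1 : DifferentiableAt ℝ f p := diffAt_of_smoothOn hO hf hp
  have d2 : DifferentiableAt ℝ g p := diffAt_of_smoothOn hO hg hp
  rw [pdu_eq_fderiv (d1.inner ℝ d2)]
  exact fderiv_inner_apply (𝕜 := ℝ) d1 d2 _

theorem pdv_inner {O : Set (ℝ × ℝ)} (hO : IsOpen O) {f g : ℝ × ℝ → E3}
    (hf : ContDiffOn ℝ (⊤ : ℕ∞) f O) (hg : ContDiffOn ℝ (⊤ : ℕ∞) g O) {p : ℝ × ℝ} (hp : p ∈ O) :
    pdv (fun q => ⟪f q, g q⟫) p = ⟪f p, Dw (0,1) g p⟫ + ⟪Dw (0,1) f p, g p⟫ := by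
  have d1 : DifferentiableAt ℝ f p := diffAt_of_smoothOn hO hf hp
  have d2 : DifferentiableAt ℝ g p := diffAt_of_smoothOn hO hg hp
  rw [pdv_eq_fderiv (d1.inner ℝ d2)]
  exact fderiv_inner_apply (𝕜 := ℝ) d1 d2 _

theorem pdu_inner_add {O : Set (ℝ × ℝ)} (hO : IsOpen O) {f g f' g' : ℝ × ℝ → E3}
    (hf : ContDiffOn ℝ (⊤ : ℕ∞) f O) (hg : ContDiffOn ℝ (⊤ : ℕ∞) g O)
    (hf' : ContDiffOn ℝ (⊤ : ℕ∞) f' O) (hg' : ContDiffOn ℝ (⊤ : ℕ∞) g' O) {p : ℝ × ℝ} (hp : p ∈ O) :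
    pdu (fun q => ⟪f q, g q⟫ + ⟪f' q, g' q⟫) p =
      (⟪f p, Dw (1,0) g p⟫ + ⟪Dw (1,0) f p, g p⟫) +
      (⟪f' p, Dw (1,0) g' p⟫ + ⟪Dw (1,0) f' p, g' p⟫) := by
  have d1 : DifferentiableAt ℝ f p := diffAt_of_smoothOn hO hf hp
  have d2 : DifferentiableAt ℝ g p := diffAt_of_smoothOn hO hg hp
  have d3 : DifferentiableAt ℝ f' p := diffAt_of_smoothOn hO hf' hp
  have d4 : DifferentiableAt ℝ g' p := diffAt_of_smoothOn hO hg' hp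
  have e1 : DifferentiableAt ℝ (fun q => ⟪f q, g q⟫) p := d1.inner ℝ d2
  have e2 : DifferentiableAt ℝ (fun q => ⟪f' q, g' q⟫) p := d3.inner ℝ d4
  rw [pdu_eq_fderiv (e1.fun_add e2), fderiv_fun_add e1 e2, ContinuousLinearMap.add_apply,
    fderiv_inner_apply (𝕜 := ℝ) d1 d2, fderiv_inner_apply (𝕜 := ℝ) d3 d4]
  rfl

theorem pdv_inner_add {O : Set (ℝ × ℝ)} (hO : IsOpen O) {f g f' g' : ℝ × ℝ → E3}
    (hf : ContDiffOn ℝ (⊤ : ℕ∞) f O) (hg : ContDiffOn ℝ (⊤ : ℕ∞) g O)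
    (hf' : ContDiffOn ℝ (⊤ : ℕ∞) f' O) (hg' : ContDiffOn ℝ (⊤ : ℕ∞) g' O) {p : ℝ × ℝ} (hp : p ∈ O) :
    pdv (fun q => ⟪f q, g q⟫ + ⟪f' q, g' q⟫) p =
      (⟪f p, Dw (0,1) g p⟫ + ⟪Dw (0,1) f p, g p⟫) +
      (⟪f' p, Dw (0,1) g' p⟫ + ⟪Dw (0,1) f' p, g' p⟫) := by
  have d1 : DifferentiableAt ℝ f p := diffAt_of_smoothOn hO hf hp
  have d2 : DifferentiableAt ℝ g p := diffAt_of_smoothOn hO hg hp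
  have d3 : DifferentiableAt ℝ f' p := diffAt_of_smoothOn hO hf' hp
  have d4 : DifferentiableAt ℝ g' p := diffAt_of_smoothOn hO hg' hp
  have e1 : DifferentiableAt ℝ (fun q => ⟪f q, g q⟫) p := d1.inner ℝ d2
  have e2 : DifferentiableAt ℝ (fun q => ⟪f' q, g' q⟫) p := d3.inner ℝ d4
  rw [pdv_eq_fderiv (e1.fun_add e2), fderiv_fun_add e1 e2, ContinuousLinearMap.add_apply,
    fderiv_inner_apply (𝕜 := ℝ) d1 d2, fderiv_inner_apply (𝕜 := ℝ) d3 d4]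
  rfl

theorem eqOn_eventuallyEq {X : Type} [NormedAddCommGroup X] [NormedSpace ℝ X]
    {O : Set (ℝ × ℝ)} (hO : IsOpen O) {f g : ℝ × ℝ → X}
    (h : ∀ q ∈ O, f q = g q) {p : ℝ × ℝ} (hp : p ∈ O) : f =ᶠ[nhds p] g := by
  filter_upwards [hO.eventually_mem hp] with q hq using h q hq

/-- The coefficient `E = ⟨σ_u, σ_u⟩` of the first fundamental form. -/
def Ef (σ : ℝ × ℝ → E3) (p : ℝ × ℝ) : ℝ := ⟪pdu σ p, pdu σ p⟫

/-- The coefficient `F = ⟨σ_u, σ_v⟩` of the first fundamental form. -/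
def Ff (σ : ℝ × ℝ → E3) (p : ℝ × ℝ) : ℝ := ⟪pdu σ p, pdv σ p⟫

/-- The coefficient `G = ⟨σ_v, σ_v⟩` of the first fundamental form. -/
def Gf (σ : ℝ × ℝ → E3) (p : ℝ × ℝ) : ℝ := ⟪pdv σ p, pdv σ p⟫

/-- The `3 × 3` matrix `[a | b | c]` with columns `a`, `b`, `c`. -/
def colMat (a b c : E3) : Matrix (Fin 3) (Fin 3) ℝ :=
  Matrix.of fun i j => ![a, b, c] j i

open Matrix

set_option maxHeartbeats 2000000 in
/-- With `ℒ = [σ_uu | σ_u | σ_v]`, `ℳ = [σ_uv | σ_u | σ_v]` and `𝒩 = [σ_vv | σ_u | σ_v]`,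
one has `det(ℒᵀ𝒩) − det(ℳᵀℳ) = det B₁ − det B₂`, where
`B₁ = [[−½E_vv + F_uv − ½G_uu, ½E_u, F_u − ½E_v], [F_v − ½G_u, E, F], [½G_v, F, G]]` and
`B₂ = [[0, ½E_v, ½G_u], [½E_v, E, F], [½G_u, F, G]]`. -/
theorem det_transpose_mul_sub (O : Set (ℝ × ℝ)) (hO : IsOpen O)
    (σ : ℝ × ℝ → E3) (hσ : ContDiffOn ℝ (⊤ : ℕ∞) σ O)
    (p : ℝ × ℝ) (hp : p ∈ O) :
    ((colMat (pdu (pdu σ) p) (pdu σ p) (pdv σ p))ᵀ *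
        colMat (pdv (pdv σ) p) (pdu σ p) (pdv σ p)).det -
      ((colMat (pdv (pdu σ) p) (pdu σ p) (pdv σ p))ᵀ *
        colMat (pdv (pdu σ) p) (pdu σ p) (pdv σ p)).det =
    (!![-(1 / 2) * pdv (pdv (Ef σ)) p + pdv (pdu (Ff σ)) p - (1 / 2) * pdu (pdu (Gf σ)) p,
          (1 / 2) * pdu (Ef σ) p, pdu (Ff σ) p - (1 / 2) * pdv (Ef σ) p;
        pdv (Ff σ) p - (1 / 2) * pdu (Gf σ) p, Ef σ p, Ff σ p;
        (1 / 2) * pdv (Gf σ) p, Ff σ p, Gf σ p]).det -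
    (!![(0 : ℝ), (1 / 2) * pdv (Ef σ) p, (1 / 2) * pdu (Gf σ) p;
        (1 / 2) * pdv (Ef σ) p, Ef σ p, Ff σ p;
        (1 / 2) * pdu (Gf σ) p, Ff σ p, Gf σ p]).det := by
    -- smoothness of the various directional derivatives
  have hσ1 : ContDiffOn ℝ (⊤ : ℕ∞) (Dw (1,0) σ) O := Dw_smooth hO hσ _
  have hσ2 : ContDiffOn ℝ (⊤ : ℕ∞) (Dw (0,1) σ) O := Dw_smooth hO hσ _
  have hσ11 : ContDiffOn ℝ (⊤ : ℕ∞) (Dw (1,0) (Dw (1,0) σ)) O := Dw_smooth hO hσ1 _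
  have hσ12 : ContDiffOn ℝ (⊤ : ℕ∞) (Dw (0,1) (Dw (1,0) σ)) O := Dw_smooth hO hσ1 _
  have hσ21 : ContDiffOn ℝ (⊤ : ℕ∞) (Dw (1,0) (Dw (0,1) σ)) O := Dw_smooth hO hσ2 _
  have hσ22 : ContDiffOn ℝ (⊤ : ℕ∞) (Dw (0,1) (Dw (0,1) σ)) O := Dw_smooth hO hσ2 _
  -- E, F, G pointwise on O
  have hE : ∀ q ∈ O, Ef σ q = ⟪Dw (1,0) σ q, Dw (1,0) σ q⟫ := by
    intro q hq
    show (⟪pdu σ q, pdu σ q⟫ : ℝ) = _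
    rw [pdu_eq_fderiv (diffAt_of_smoothOn hO hσ hq)]; rfl
  have hF : ∀ q ∈ O, Ff σ q = ⟪Dw (1,0) σ q, Dw (0,1) σ q⟫ := by
    intro q hq
    show (⟪pdu σ q, pdv σ q⟫ : ℝ) = _
    rw [pdu_eq_fderiv (diffAt_of_smoothOn hO hσ hq),
      pdv_eq_fderiv (diffAt_of_smoothOn hO hσ hq)]; rfl
  have hG : ∀ q ∈ O, Gf σ q = ⟪Dw (0,1) σ q, Dw (0,1) σ q⟫ := by
    intro q hq
    show (⟪pdv σ q, pdv σ q⟫ : ℝ) = _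
    rw [pdv_eq_fderiv (diffAt_of_smoothOn hO hσ hq)]; rfl
  -- first derivatives of E, F, G pointwise on O
  have hEu : ∀ q ∈ O, pdu (Ef σ) q =
      ⟪Dw (1,0) σ q, Dw (1,0) (Dw (1,0) σ) q⟫ + ⟪Dw (1,0) (Dw (1,0) σ) q, Dw (1,0) σ q⟫ := by
    intro q hq
    rw [pdu_congr (eqOn_eventuallyEq hO hE hq)]
    exact pdu_inner hO hσ1 hσ1 hq
  have hEv : ∀ q ∈ O, pdv (Ef σ) q =
      ⟪Dw (1,0) σ q, Dw (0,1) (Dw (1,0) σ) q⟫ + ⟪Dw (0,1) (Dw (1,0) σ) q, Dw (1,0) σ q⟫ := by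
    intro q hq
    rw [pdv_congr (eqOn_eventuallyEq hO hE hq)]
    exact pdv_inner hO hσ1 hσ1 hq
  have hFu : ∀ q ∈ O, pdu (Ff σ) q =
      ⟪Dw (1,0) σ q, Dw (1,0) (Dw (0,1) σ) q⟫ + ⟪Dw (1,0) (Dw (1,0) σ) q, Dw (0,1) σ q⟫ := by
    intro q hq
    rw [pdu_congr (eqOn_eventuallyEq hO hF hq)]
    exact pdu_inner hO hσ1 hσ2 hq
  have hFv : ∀ q ∈ O, pdv (Ff σ) q =
      ⟪Dw (1,0) σ q, Dw (0,1) (Dw (0,1) σ) q⟫ + ⟪Dw (0,1) (Dw (1,0) σ) q, Dw (0,1) σ q⟫ := by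
    intro q hq
    rw [pdv_congr (eqOn_eventuallyEq hO hF hq)]
    exact pdv_inner hO hσ1 hσ2 hq
  have hGu : ∀ q ∈ O, pdu (Gf σ) q =
      ⟪Dw (0,1) σ q, Dw (1,0) (Dw (0,1) σ) q⟫ + ⟪Dw (1,0) (Dw (0,1) σ) q, Dw (0,1) σ q⟫ := by
    intro q hq
    rw [pdu_congr (eqOn_eventuallyEq hO hG hq)]
    exact pdu_inner hO hσ2 hσ2 hq
  have hGv : ∀ q ∈ O, pdv (Gf σ) q =
      ⟪Dw (0,1) σ q, Dw (0,1) (Dw (0,1) σ) q⟫ + ⟪Dw (0,1) (Dw (0,1) σ) q, Dw (0,1) σ q⟫ := by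
    intro q hq
    rw [pdv_congr (eqOn_eventuallyEq hO hG hq)]
    exact pdv_inner hO hσ2 hσ2 hq
  -- second derivatives at p
  have hEvv : pdv (pdv (Ef σ)) p =
      (⟪Dw (1,0) σ p, Dw (0,1) (Dw (0,1) (Dw (1,0) σ)) p⟫ +
        ⟪Dw (0,1) (Dw (1,0) σ) p, Dw (0,1) (Dw (1,0) σ) p⟫) +
      (⟪Dw (0,1) (Dw (1,0) σ) p, Dw (0,1) (Dw (1,0) σ) p⟫ +
        ⟪Dw (0,1) (Dw (0,1) (Dw (1,0) σ)) p, Dw (1,0) σ p⟫) := by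
    rw [pdv_congr (eqOn_eventuallyEq hO hEv hp)]
    exact pdv_inner_add hO hσ1 hσ12 hσ12 hσ1 hp
  have hGuu : pdu (pdu (Gf σ)) p =
      (⟪Dw (0,1) σ p, Dw (1,0) (Dw (1,0) (Dw (0,1) σ)) p⟫ +
        ⟪Dw (1,0) (Dw (0,1) σ) p, Dw (1,0) (Dw (0,1) σ) p⟫) +
      (⟪Dw (1,0) (Dw (0,1) σ) p, Dw (1,0) (Dw (0,1) σ) p⟫ +
        ⟪Dw (1,0) (Dw (1,0) (Dw (0,1) σ)) p, Dw (0,1) σ p⟫) := by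
    rw [pdu_congr (eqOn_eventuallyEq hO hGu hp)]
    exact pdu_inner_add hO hσ2 hσ21 hσ21 hσ2 hp
  have hFuv : pdv (pdu (Ff σ)) p =
      (⟪Dw (1,0) σ p, Dw (0,1) (Dw (1,0) (Dw (0,1) σ)) p⟫ +
        ⟪Dw (0,1) (Dw (1,0) σ) p, Dw (1,0) (Dw (0,1) σ) p⟫) +
      (⟪Dw (1,0) (Dw (1,0) σ) p, Dw (0,1) (Dw (0,1) σ) p⟫ +
        ⟪Dw (0,1) (Dw (1,0) (Dw (1,0) σ)) p, Dw (0,1) σ p⟫) := by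
    rw [pdv_congr (eqOn_eventuallyEq hO hFu hp)]
    exact pdv_inner_add hO hσ1 hσ21 hσ11 hσ2 hp
  -- partial derivatives of σ at p
  have hσu : pdu σ p = Dw (1,0) σ p := pdu_eq_fderiv (diffAt_of_smoothOn hO hσ hp)
  have hσv : pdv σ p = Dw (0,1) σ p := pdv_eq_fderiv (diffAt_of_smoothOn hO hσ hp)
  have hσuu : pdu (pdu σ) p = Dw (1,0) (Dw (1,0) σ) p := pdu_pdu hO hσ hp
  have hσuv : pdv (pdu σ) p = Dw (0,1) (Dw (1,0) σ) p := pdv_pdu hO hσ hp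
  have hσvv : pdv (pdv σ) p = Dw (0,1) (Dw (0,1) σ) p := pdv_pdv hO hσ hp
  -- symmetry of mixed derivatives
  have hmix : ∀ q ∈ O, Dw (0,1) (Dw (1,0) σ) q = Dw (1,0) (Dw (0,1) σ) q :=
    fun q hq => Dw_comm hO hσ hq _ _
  have hmixev := eqOn_eventuallyEq hO hmix hp
  have s1 : Dw (0,1) (Dw (1,0) σ) p = Dw (1,0) (Dw (0,1) σ) p := hmix p hp
  have s2 : Dw (0,1) (Dw (1,0) (Dw (1,0) σ)) p = Dw (1,0) (Dw (1,0) (Dw (0,1) σ)) p := by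
    refine (Dw_comm hO hσ1 hp _ _).trans ?_
    show fderiv ℝ _ p (1,0) = fderiv ℝ _ p (1,0)
    rw [hmixev.fderiv_eq]
  have s3 : Dw (0,1) (Dw (0,1) (Dw (1,0) σ)) p = Dw (0,1) (Dw (1,0) (Dw (0,1) σ)) p := by
    show fderiv ℝ _ p (0,1) = fderiv ℝ _ p (0,1)
    rw [hmixev.fderiv_eq]
  rw [hEvv, hGuu, hFuv, hE p hp, hF p hp, hG p hp, hEu p hp, hEv p hp, hFu p hp, hFv p hp,
    hGu p hp, hGv p hp, hσuu, hσuv, hσvv, hσu, hσv, ← s2, ← s3, s1]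
  simp only [colMat, Matrix.det_fin_three, Matrix.mul_apply, Matrix.transpose_apply,
    Matrix.of_apply, Fin.sum_univ_three, PiLp.inner_apply, RCLike.inner_apply, conj_trivial,
    Matrix.cons_val', Matrix.cons_val_zero, Matrix.cons_val_one, Matrix.head_cons,
    Matrix.empty_val', Matrix.cons_val_fin_one, Matrix.head_fin_const, Matrix.cons_val_two,
    Matrix.tail_cons]
  ring
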